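/- arXiv:1906.09494 — 2 statements merged into one kernel-verified Lean document; each statement's English description precedes it below -/
import Mathlib

section
/- Let the state evolution maps be $F_{\mathrm{TIN}}(\tau^2) = \sigma_w^2 + \frac{\lambda N(B-1)}{L}\mathbb{E}[G_{/b}^2] + \frac{\lambda \hat{a} N}{L}\int_{\epsilon_2}^{\infty}\psi(g;\tau^2)dg$ (treating interference as noise) and $F_{\mathrm{REC}}(\tau^2) = \sigma_w^2 + \frac{\lambda \check{a} N B}{L}\int_{\epsilon_1}^{\infty}\psi(g;\tau^2)dg$ (recovering interference), where $\psi(g;\tau^2) = \frac{g^{2-\gamma}\tau^2}{g^2+\tau^2} + \frac{g^{4-\gamma}}{g^2+\tau^2}\left(1 - \frac{\varphi_M(g^2/\tau^2)}{\Gamma(M+1)}\right)$, $\hat{a} = a/R_{cell}^2$, $\check{a} = a/R_{net}^2$, $\check{a}B = \hat{a}$ (when $R_{net}^2 = B R_{cell}^2$), $\epsilon_1 < \epsilon_2$, and $\mathbb{E}[G_{/b}^2] = \int_{\epsilon_1}^{\epsilon_2} \frac{a g^{2-\gamma}}{R_{net}^2 - R_{cell}^2} dg$. Then for every $\tau^2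 > 0$, $F_{\mathrm{REC}}(\tau^2) < F_{\mathrm{TIN}}(\tau^2)$. -/
open MeasureTheory Real Set

/-- `φ_M(s) = ∫₀^∞ t^M e^(-t) / (1 + ((1-λ)/λ)(1+s)^M e^(-st)) dt`. -/
noncomputable def phiM (lam : ℝ) (M : ℕ) (s : ℝ) : ℝ :=
  ∫ t in Ioi (0 : ℝ),
    t ^ M * Real.exp (-t) / (1 + (1 - lam) / lam * (1 + s) ^ M * Real.exp (-s * t))

/-- `ψ(g; τ²)` of eq. (23). -/
noncomputable def psi (lam : ℝ) (M : ℕ) (γ : ℝ) (g τ2 : ℝ) : ℝ :=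
  g ^ (2 - γ) * τ2 / (g ^ 2 + τ2)
    + g ^ (4 - γ) / (g ^ 2 + τ2) * (1 - phiM lam M (g ^ 2 / τ2) / Real.Gamma (M + 1))

lemma phiM_pos {lam : ℝ} (hlam0 : 0 < lam) (hlam1 : lam < 1) (M : ℕ) {s : ℝ} (hs : 0 < s) :
    0 < phiM lam M s := by
  have hc0 : 0 < (1 - lam) / lam := div_pos (by linarith) hlam0
  set f := fun t : ℝ => t ^ M * Real.exp (-t) / (1 + (1 - lam) / lam * (1 + s) ^ M * Real.exp (-s * t)) with hf
  have hD : ∀ t : ℝ, 1 ≤ 1 + (1 - lam) / lam * (1 + s) ^ M * Real.exp (-s * t) := by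
    intro t
    have h1 : (0:ℝ) < (1 + s) ^ M := pow_pos (by linarith) M
    nlinarith [Real.exp_pos (-s * t), mul_pos (mul_pos hc0 h1) (Real.exp_pos (-s*t))]
  have hfpos : ∀ t ∈ Ioi (0:ℝ), 0 < f t := fun t ht =>
    div_pos (mul_pos (pow_pos ht M) (Real.exp_pos _)) (lt_of_lt_of_le one_pos (hD t))
  have hg : IntegrableOn (fun t : ℝ => Real.exp (-t) * t ^ ((M:ℝ) + 1 - 1)) (Ioi 0) :=
    Real.GammaIntegral_convergent (by positivity)
  have hfcont : Continuous f := by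
    apply Continuous.div
    · exact (continuous_pow M).mul (Real.continuous_exp.comp continuous_neg)
    · continuity
    · intro t; exact ne_of_gt (lt_of_lt_of_le one_pos (hD t))
  have hfint : IntegrableOn f (Ioi 0) := by
    refine Integrable.mono' hg hfcont.aestronglyMeasurable.restrict ?_
    filter_upwards [ae_restrict_mem measurableSet_Ioi] with t ht
    have ht0 : (0:ℝ) < t := ht
    rw [Real.norm_eq_abs, abs_of_nonneg (le_of_lt (hfpos t ht))]
    have heq : Real.exp (-t) * t ^ ((M:ℝ) + 1 - 1) = t ^ M * Real.exp (-t) := by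
      rw [add_sub_cancel_right, Real.rpow_natCast]; ring
    rw [heq]
    exact div_le_self (by positivity) (hD t)
  rw [phiM]
  refine (setIntegral_pos_iff_support_of_nonneg_ae ?_ hfint).mpr ?_
  · filter_upwards [ae_restrict_mem measurableSet_Ioi] with t ht
    exact (hfpos t ht).le
  · refine lt_of_lt_of_le ?_
      (measure_mono (fun t ht => (⟨(hfpos t ht).ne', ht⟩ :
        t ∈ Function.support f ∩ Ioi 0)))
    simp [Real.volume_Ioi]

lemma psi_lt {lam γ : ℝ} (hlam0 : 0 < lam) (hlam1 : lam < 1) (M : ℕ)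
    {g τ2 : ℝ} (hg : 0 < g) (hτ : 0 < τ2) :
    psi lam M γ g τ2 < g ^ (2 - γ) := by
  have hden : 0 < g ^ 2 + τ2 := by positivity
  have hphi : 0 < phiM lam M (g ^ 2 / τ2) := phiM_pos hlam0 hlam1 M (by positivity)
  have hΓ : 0 < Real.Gamma ((M:ℝ) + 1) := Real.Gamma_pos_of_pos (by positivity)
  have h4 : g ^ (4 - γ) = g ^ (2 - γ) * g ^ 2 := by
    rw [← Real.rpow_natCast g 2, ← Real.rpow_add hg]; congr 1; push_cast; ring
  have key : g ^ (2 - γ) * τ2 / (g ^ 2 + τ2) + g ^ (4 - γ) / (g ^ 2 + τ2) = g ^ (2 - γ) := by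
    rw [h4]; field_simp; ring
  have hBp : 0 < g ^ (4 - γ) / (g ^ 2 + τ2) * (phiM lam M (g ^ 2 / τ2) / Real.Gamma ((M:ℝ) + 1)) :=
    mul_pos (div_pos (Real.rpow_pos_of_pos hg _) hden) (div_pos hphi hΓ)
  rw [psi]
  push_cast
  nlinarith [key, hBp]

/-- **Proposition 5 (pointwise map comparison).** The state-evolution map for recovering
the interference is pointwise strictly smaller than the map for treating interference as
noise: `F_REC(τ²) < F_TIN(τ²)` for every `τ² > 0`. -/
theorem stmt_9 (lam : ℝ) (hlam0 : 0 < lam) (hlam1 : lam < 1)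
    (N L : ℝ) (hN : 0 < N) (hL : 0 < L) (B : ℕ) (hB : 2 ≤ B) (M : ℕ)
    (σw2 a γ ε1 ε2 Rcell Rnet : ℝ) (hσ : 0 ≤ σw2) (ha : 0 < a) (hγ : 1 < γ)
    (hε1 : 0 < ε1) (hε12 : ε1 < ε2) (hRcell : 0 < Rcell)
    (hRnet : Rnet ^ 2 = B * Rcell ^ 2)
    (aHat aCheck EG2 : ℝ)
    (haHat : aHat = a / Rcell ^ 2) (haCheck : aCheck = a / Rnet ^ 2)
    (hEG2 : EG2 = ∫ g in ε1..ε2, a * g ^ (2 - γ) / (Rnet ^ 2 - Rcell ^ 2))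
    (FTIN FREC : ℝ → ℝ)
    (hFTIN : FTIN = fun τ2 => σw2 + lam * N * ((B : ℝ) - 1) / L * EG2
      + lam * aHat * N / L * ∫ g in Ioi ε2, psi lam M γ g τ2)
    (hFREC : FREC = fun τ2 => σw2
      + lam * aCheck * N * B / L * ∫ g in Ioi ε1, psi lam M γ g τ2)
    (hInt : ∀ τ2 : ℝ, 0 < τ2 → IntegrableOn (fun g => psi lam M γ g τ2) (Ioi ε1)) :
    ∀ τ2 : ℝ, 0 < τ2 → FREC τ2 < FTIN τ2 := by
  intro τ2 hτ
  have hB2 : (2:ℝ) ≤ (B:ℝ) := by exact_mod_cast hB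
  have hB1 : (0:ℝ) < (B:ℝ) - 1 := by linarith
  have hBpos : (0:ℝ) < (B:ℝ) := by linarith
  have hRd : Rnet ^ 2 - Rcell ^ 2 = ((B:ℝ) - 1) * Rcell ^ 2 := by rw [hRnet]; ring
  have hIψ := hInt τ2 hτ
  have hunion : Ioc ε1 ε2 ∪ Ioi ε2 = Ioi ε1 := Ioc_union_Ioi_eq_Ioi hε12.le
  have hsub1 : Ioc ε1 ε2 ⊆ Ioi ε1 := fun x hx => hx.1
  have hsub2 : Ioi ε2 ⊆ Ioi ε1 := Ioi_subset_Ioi hε12.le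
  have hIm : IntegrableOn (fun g => psi lam M γ g τ2) (Ioc ε1 ε2) := hIψ.mono_set hsub1
  have hI2 : IntegrableOn (fun g => psi lam M γ g τ2) (Ioi ε2) := hIψ.mono_set hsub2
  have hsplit : (∫ g in Ioi ε1, psi lam M γ g τ2)
      = (∫ g in Ioc ε1 ε2, psi lam M γ g τ2) + ∫ g in Ioi ε2, psi lam M γ g τ2 := by
    rw [← hunion, setIntegral_union (Ioc_disjoint_Ioi le_rfl) measurableSet_Ioi hIm hI2]
  have hJint : IntegrableOn (fun g : ℝ => g ^ (2 - γ)) (Ioc ε1 ε2) := by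
    apply (ContinuousOn.integrableOn_compact isCompact_Icc ?_).mono_set Ioc_subset_Icc_self
    intro x hx
    exact (Real.continuousAt_rpow_const x (2 - γ)
      (Or.inl (by linarith [hx.1] : x ≠ 0))).continuousWithinAt
  have hdiffint : IntegrableOn (fun g : ℝ => g ^ (2 - γ) - psi lam M γ g τ2) (Ioc ε1 ε2) :=
    hJint.sub hIm
  have hpos : 0 < ∫ g in Ioc ε1 ε2, (g ^ (2 - γ) - psi lam M γ g τ2) := by
    refine (setIntegral_pos_iff_support_of_nonneg_ae ?_ hdiffint).mpr ?_
    · filter_upwards [ae_restrict_mem measurableSet_Ioc] with x hx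
      exact sub_nonneg.mpr (psi_lt hlam0 hlam1 M (hε1.trans hx.1) hτ).le
    · refine lt_of_lt_of_le ?_ (measure_mono (fun x hx =>
        (⟨(sub_pos.mpr (psi_lt hlam0 hlam1 M (hε1.trans hx.1) hτ)).ne', hx⟩ :
          x ∈ Function.support (fun g : ℝ => g ^ (2 - γ) - psi lam M γ g τ2) ∩ Ioc ε1 ε2)))
      rw [Real.volume_Ioc]
      exact ENNReal.ofReal_pos.mpr (by linarith)
  rw [integral_sub hJint hIm] at hpos
  have hImJ : (∫ g in Ioc ε1 ε2, psi lam M γ g τ2) < ∫ g in Ioc ε1 ε2, (g : ℝ) ^ (2 - γ) := by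
    linarith
  have hEG2' : EG2 = a / (((B:ℝ) - 1) * Rcell ^ 2) * ∫ g in Ioc ε1 ε2, (g : ℝ) ^ (2 - γ) := by
    rw [hEG2, intervalIntegral.integral_of_le hε12.le, ← integral_const_mul]
    refine setIntegral_congr_fun measurableSet_Ioc fun g _ => ?_
    rw [hRd]
    ring
  have hack : lam * aCheck * N * (B:ℝ) / L = lam * aHat * N / L := by
    rw [haCheck, haHat, hRnet]
    field_simp
  have hC : 0 < lam * aHat * N / L := by rw [haHat]; positivity
  have hRHS : lam * N * ((B:ℝ) - 1) / L * EG2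
      = lam * aHat * N / L * ∫ g in Ioc ε1 ε2, (g : ℝ) ^ (2 - γ) := by
    rw [hEG2', haHat]
    field_simp
  rw [hFREC, hFTIN]
  simp only
  rw [hack, hsplit, hRHS]
  nlinarith [mul_lt_mul_of_pos_left hImJ hC]
end

section
/- For fixed $M$, $\tau > 0$, threshold function $l(g) $ chosen so that $P_M = P_F$ (equal error probability), the common error probability is strictly decreasing in $g$: if $g_1 > g_2 > 0$ and $l_i$ satisfies $\bar{\gamma}(M, l_i/(g_i^2+\tau^2)) = \Gamma(M) - \bar{\gamma}(M, l_i/\tau^2)$ for $i = 1,2$, then the common error value $\bar{\gamma}(M, l_1/(g_1^2+\tau^2))/\Gamma(M) < \bar{\gamma}(M, l_2/(g_2^2+\tau^2))/\Gamma(M)$. -/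
open Real

/-- The lower incomplete Gamma function `γ̄(M, x) = ∫₀ˣ t^(M-1) e^(-t) dt`. -/
noncomputable def lowerGamma (M : ℕ) (x : ℝ) : ℝ :=
  ∫ t in (0 : ℝ)..x, t ^ (M - 1 : ℕ) * Real.exp (-t)

lemma lowerGamma_strictMono (M : ℕ) {x y : ℝ} (hx : 0 < x) (hxy : x < y) :
    lowerGamma M x < lowerGamma M y := by
  have hcont : Continuous fun t : ℝ => t ^ (M - 1 : ℕ) * Real.exp (-t) := by
    continuity
  have hsub : lowerGamma M y - lowerGamma M x
      = ∫ t in x..y, t ^ (M - 1 : ℕ) * Real.exp (-t) := by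
    unfold lowerGamma
    rw [eq_comm, ← intervalIntegral.integral_interval_sub_left
      (hcont.intervalIntegrable 0 y) (hcont.intervalIntegrable 0 x)]
  have hpos : 0 < ∫ t in x..y, t ^ (M - 1 : ℕ) * Real.exp (-t) := by
    apply intervalIntegral.intervalIntegral_pos_of_pos_on
      (hcont.intervalIntegrable x y)
    · intro t ht
      exact mul_pos (pow_pos (hx.trans ht.1) _) (Real.exp_pos _)
    · exact hxy
  linarith [hsub ▸ hpos]

/-- **Equal-error performance improves with the channel strength.** For fixed `M ≥ 1`,
`τ > 0`, if for each `i` the threshold `l i > 0` is chosen so that the missed detection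
and false alarm probabilities are equal, i.e.
`γ̄(M, lᵢ/(gᵢ²+τ²)) = Γ(M) - γ̄(M, lᵢ/τ²)`, and `g₁ > g₂ > 0`, then the common error
probability for the stronger user is strictly smaller:
`γ̄(M, l₁/(g₁²+τ²))/Γ(M) < γ̄(M, l₂/(g₂²+τ²))/Γ(M)`. -/
theorem stmt_18 (M : ℕ) (hM : 1 ≤ M) (τ : ℝ) (hτ : 0 < τ)
    (g₁ g₂ l₁ l₂ : ℝ) (hg₂ : 0 < g₂) (hg : g₂ < g₁) (hl₁ : 0 < l₁) (hl₂ : 0 < l₂)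
    (heq₁ : lowerGamma M (l₁ / (g₁ ^ 2 + τ ^ 2))
      = Real.Gamma M - lowerGamma M (l₁ / τ ^ 2))
    (heq₂ : lowerGamma M (l₂ / (g₂ ^ 2 + τ ^ 2))
      = Real.Gamma M - lowerGamma M (l₂ / τ ^ 2)) :
    lowerGamma M (l₁ / (g₁ ^ 2 + τ ^ 2)) / Real.Gamma M
      < lowerGamma M (l₂ / (g₂ ^ 2 + τ ^ 2)) / Real.Gamma M := by
  have hΓ : 0 < Real.Gamma M := Real.Gamma_pos_of_pos (by positivity)
  have hd₁ : (0:ℝ) < g₁ ^ 2 + τ ^ 2 := by positivity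
  have hd₂ : (0:ℝ) < g₂ ^ 2 + τ ^ 2 := by positivity
  have hdd : g₂ ^ 2 + τ ^ 2 < g₁ ^ 2 + τ ^ 2 := by nlinarith
  set a₁ := l₁ / (g₁ ^ 2 + τ ^ 2) with ha₁
  set a₂ := l₂ / (g₂ ^ 2 + τ ^ 2) with ha₂
  have ha₁pos : 0 < a₁ := div_pos hl₁ hd₁
  have ha₂pos : 0 < a₂ := div_pos hl₂ hd₂
  have hb₂pos : 0 < l₂ / τ ^ 2 := div_pos hl₂ (by positivity)
  have key : lowerGamma M a₁ < lowerGamma M a₂ := by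
    by_contra h
    push_neg at h
    have haa : a₂ ≤ a₁ := by
      by_contra h'
      push_neg at h'
      exact absurd (lowerGamma_strictMono M ha₁pos h') (not_lt.mpr h)
    have hll : l₂ < l₁ := by
      have h1 : a₂ * (g₂ ^ 2 + τ ^ 2) < a₁ * (g₁ ^ 2 + τ ^ 2) := by
        calc a₂ * (g₂ ^ 2 + τ ^ 2) < a₂ * (g₁ ^ 2 + τ ^ 2) := by
              exact mul_lt_mul_of_pos_left hdd ha₂pos
          _ ≤ a₁ * (g₁ ^ 2 + τ ^ 2) := by
              exact mul_le_mul_of_nonneg_right haa hd₁.le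
      rw [ha₁, ha₂, div_mul_cancel₀ _ hd₂.ne', div_mul_cancel₀ _ hd₁.ne'] at h1
      exact h1
    have hbb : lowerGamma M (l₂ / τ ^ 2) < lowerGamma M (l₁ / τ ^ 2) :=
      lowerGamma_strictMono M hb₂pos (by gcongr)
    rw [heq₁, heq₂] at h
    linarith
  exact div_lt_div_of_pos_right key hΓ
end
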